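/- Max-relative entropy computation in the repeater example: Fix d ∈ ℕ, d ≥ 2, set p = 1/(√d + 1), and let U be the d×d quantum Fourier transform with entries u_{jk} = e^{2πijk/d}/√d. Define Y = (1/d) Σ_{i,j=1}^d u_{ij} |ii⟩⟨jj| ∈ M_{d²}(ℂ). On ℂ²_{A'} ⊗ ℂ²_{B'} ⊗ ℂ^d_A ⊗ ℂ^d_B, regarded as a 4×4 block matrix over the A'B' qubit indices (ordered |00⟩, |01⟩, |10⟩, |11⟩) with entries in M_{d²}(ℂ), define C_S = (1/(2(1+p))) · diag[(1−p)·(I_d/d)⊗(I_d/d), 2p·√(YY†), 2p·√(Y†Y), (1−p)·(I_d/d)⊗(I_d/d)] (off-diagonal blocks zero), and define M as the block matrix with diagonal blocks (1/2)·[(1−p)·(I_d/d)⊗(I_d/d), p·√(YY†), p·√(Y†Y), (1−p)·(I_d/d)⊗(I_d/d)], with block entry p·Y/2 at block position (|01⟩,|10⟩), block entry p·Y†/2 at block position (|10⟩,|01⟩), and all other off-diagonal blocks zero. Then (1+p)·C_S − M is positive semidefinite; equivalently, D_max(M‖C_S) ≤ log₂(1 + p) = log₂(1 + 1/(√d + 1)).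 -/

import Mathlib

open Matrix
open scoped Kronecker ComplexOrder
attribute [local instance] Classical.propDecidable

noncomputable section

/-- Real power of a Hermitian matrix via the continuous functional calculus
(with the Moore–Penrose convention `0 ^ r = 0` for `r ≠ 0`). -/
def matRPow {n : Type*} [Fintype n] [DecidableEq n] (A : Matrix n n ℂ) (r : ℝ) :
    Matrix n n ℂ :=
  cfc (fun x : ℝ => x ^ r) A

/-- Base-2 matrix logarithm via the continuous functional calculus. -/
def matLog2 {n : Type*} [Fintype n] [DecidableEq n] (A : Matrix n n ℂ) : Matrix n n ℂ :=
  cfc (fun x : ℝ => Real.logb 2 x) A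

/-- A density matrix: positive semidefinite with unit trace. -/
def IsState {n : Type*} [Fintype n] (ρ : Matrix n n ℂ) : Prop :=
  ρ.PosSemidef ∧ ρ.trace = 1

/-- The sandwiched α-Rényi divergence
`D_α(ρ‖σ) = (α−1)⁻¹ · log₂ tr[(σ^((1−α)/(2α)) ρ σ^((1−α)/(2α)))^α]`. -/
def sandwichedRenyi {n : Type*} [Fintype n] [DecidableEq n] (α : ℝ) (ρ σ : Matrix n n ℂ) : ℝ :=
  (α - 1)⁻¹ *
    Real.logb 2
      (matRPow (matRPow σ ((1 - α) / (2 * α)) * ρ * matRPow σ ((1 - α) / (2 * α))) α).trace.re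

/-- The Umegaki relative entropy `D(ρ‖σ) = tr[ρ log₂ ρ] − tr[ρ log₂ σ]`. -/
def relEnt {n : Type*} [Fintype n] [DecidableEq n] (ρ σ : Matrix n n ℂ) : ℝ :=
  ((ρ * matLog2 ρ).trace - (ρ * matLog2 σ).trace).re

/-- The max-relative entropy `D_max(ρ‖σ) = log₂ inf{c > 0 : c·σ − ρ ⪰ 0}` (with value `⊤`
if no such `c` exists). -/
def Dmax {n : Type*} [Fintype n] (ρ σ : Matrix n n ℂ) : EReal :=
  ⨅ c : {c : ℝ // 0 < c ∧ ((c : ℝ) • σ - ρ).PosSemidef}, ((Real.logb 2 (c : ℝ) : ℝ) : EReal)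

/-- Support inclusion for positive semidefinite matrices, expressed as domination:
`supp ρ ⊆ supp σ` iff `ρ ≤ c·σ` for some `c > 0`. -/
def supportLe {n : Type*} [Fintype n] (ρ σ : Matrix n n ℂ) : Prop :=
  ∃ c : ℝ, 0 < c ∧ ((c : ℝ) • σ - ρ).PosSemidef

/-- Extended-real-valued sandwiched α-Rényi divergence, `⊤` if the support condition fails. -/
def DalphaE {n : Type*} [Fintype n] [DecidableEq n] (α : ℝ) (ρ σ : Matrix n n ℂ) : EReal :=
  if supportLe ρ σ then ((sandwichedRenyi α ρ σ : ℝ) : EReal) else ⊤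

/-- Extended-real-valued Umegaki relative entropy, `⊤` if the support condition fails. -/
def DrelE {n : Type*} [Fintype n] [DecidableEq n] (ρ σ : Matrix n n ℂ) : EReal :=
  if supportLe ρ σ then ((relEnt ρ σ : ℝ) : EReal) else ⊤

/-- Separability of a bipartite state w.r.t. the bipartition given by the product index. -/
def IsSepState {A B : Type*} [Fintype A] [Fintype B]
    (σ : Matrix (A × B) (A × B) ℂ) : Prop :=
  ∃ (k : ℕ) (p : Fin k → ℝ) (τ₁ : Fin k → Matrix A A ℂ) (τ₂ : Fin k → Matrix B B ℂ),
    (∀ i, 0 ≤ p i) ∧ (∑ i, p i = 1) ∧ (∀ i, IsState (τ₁ i)) ∧ (∀ i, IsState (τ₂ i)) ∧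
      σ = ∑ i, (p i : ℂ) • (τ₁ i ⊗ₖ τ₂ i)

/-- The max-relative entropy of entanglement of a bipartite state. -/
def EmaxState {A B : Type*} [Fintype A] [Fintype B]
    (ρ : Matrix (A × B) (A × B) ℂ) : EReal :=
  ⨅ σ : {σ : Matrix (A × B) (A × B) ℂ // IsSepState σ}, Dmax ρ (σ : Matrix (A × B) (A × B) ℂ)

/-- The α-relative entropy of entanglement of a bipartite state. -/
def EalphaState {A B : Type*} [Fintype A] [Fintype B] [DecidableEq A] [DecidableEq B]
    (α : ℝ) (ρ : Matrix (A × B) (A × B) ℂ) : EReal :=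
  ⨅ σ : {σ : Matrix (A × B) (A × B) ℂ // IsSepState σ}, DalphaE α ρ (σ : Matrix (A × B) (A × B) ℂ)

/-- The relative entropy of entanglement of a bipartite state. -/
def ERState {A B : Type*} [Fintype A] [Fintype B] [DecidableEq A] [DecidableEq B]
    (ρ : Matrix (A × B) (A × B) ℂ) : EReal :=
  ⨅ σ : {σ : Matrix (A × B) (A × B) ℂ // IsSepState σ}, DrelE ρ (σ : Matrix (A × B) (A × B) ℂ)

/-- Partial application `id_R ⊗ T` of a map `T` to the second tensor factor. -/
def applyRight {R A B : Type*} (T : Matrix A A ℂ → Matrix B B ℂ)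
    (ρ : Matrix (R × A) (R × A) ℂ) : Matrix (R × B) (R × B) ℂ :=
  Matrix.of fun x y => T (Matrix.of fun a a' => ρ (x.1, a) (y.1, a')) x.2 y.2

/-- Partial application `id_R ⊗ T ⊗ id_S` of a map `T` to the middle tensor factor. -/
def applyMiddle {R A B S : Type*} (T : Matrix A A ℂ → Matrix B B ℂ)
    (ρ : Matrix (R × A × S) (R × A × S) ℂ) : Matrix (R × B × S) (R × B × S) ℂ :=
  Matrix.of fun x y => T (Matrix.of fun a a' => ρ (x.1, a, x.2.2) (y.1, a', y.2.2)) x.2.1 y.2.1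

/-- Regroup a tripartite index `A × (B × C)` as `(A × B) × C`. -/
def assocL {A B C : Type*} (ρ : Matrix (A × B × C) (A × B × C) ℂ) :
    Matrix ((A × B) × C) ((A × B) × C) ℂ :=
  ρ.submatrix (Equiv.prodAssoc A B C) (Equiv.prodAssoc A B C)

/-- The (normalized) Choi matrix `(id ⊗ T)(ω)` of a linear map `T`. -/
def choi {A B : Type*} [Fintype A] [DecidableEq A] (T : Matrix A A ℂ → Matrix B B ℂ) :
    Matrix (A × B) (A × B) ℂ :=
  Matrix.of fun x y => ((Fintype.card A : ℂ))⁻¹ * T (Matrix.single x.1 y.1 1) x.2 y.2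

/-- A quantum channel: linear, trace-preserving and completely positive
(the latter expressed by positive semidefiniteness of the Choi matrix). -/
def IsQChannel {A B : Type*} [Fintype A] [Fintype B] [DecidableEq A]
    (T : Matrix A A ℂ → Matrix B B ℂ) : Prop :=
  IsLinearMap ℂ T ∧ (∀ X, (T X).trace = X.trace) ∧ (choi T).PosSemidef

/-- The max-relative entropy of entanglement of a quantum channel:
`E_max(T) = sup {E_max^{R:B}((id_R ⊗ T)(ρ)) : ρ a state on R ⊗ A, dim R arbitrary}`. -/
def EmaxChan {A B : Type*} [Fintype A] [Fintype B]
    (T : Matrix A A ℂ → Matrix B B ℂ) : EReal :=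
  ⨆ (dR : ℕ) (ρ : {ρ : Matrix (Fin dR × A) (Fin dR × A) ℂ // IsState ρ}),
    EmaxState (applyRight T (ρ : Matrix (Fin dR × A) (Fin dR × A) ℂ))

/-- Partial trace over the second tensor factor. -/
def ptraceSnd {B C : Type*} [Fintype C] (M : Matrix (B × C) (B × C) ℂ) : Matrix B B ℂ :=
  Matrix.of fun b b' => ∑ c : C, M (b, c) (b', c)

/-- Partial trace over the third tensor factor. -/
def ptraceThird {A B C : Type*} [Fintype C] (ρ : Matrix (A × B × C) (A × B × C) ℂ) :
    Matrix (A × B) (A × B) ℂ :=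
  Matrix.of fun x y => ∑ c : C, ρ (x.1, x.2, c) (y.1, y.2, c)

/-- Tensoring with the identity on a third factor: `M ⊗ I_C` on `A ⊗ B ⊗ C`. -/
def tensorId3 {A B C : Type*} [DecidableEq C] [Fintype C] (M : Matrix (A × B) (A × B) ℂ) :
    Matrix (A × B × C) (A × B × C) ℂ :=
  (M ⊗ₖ (1 : Matrix C C ℂ)).submatrix (Equiv.prodAssoc A B C).symm (Equiv.prodAssoc A B C).symm

end
noncomputable section

/-- The trace norm `‖M‖₁ = tr[(M†M)^{1/2}]`. -/
def traceNorm {n : Type*} [Fintype n] [DecidableEq n] (M : Matrix n n ℂ) : ℝ :=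
  (matRPow (Mᴴ * M) (1 / 2 : ℝ)).trace.re

/-- The weighted trace norm `‖X‖_{1,τ} = tr|τ^{1/2} X τ^{1/2}|`. -/
def wnorm1 {n : Type*} [Fintype n] [DecidableEq n] (τ X : Matrix n n ℂ) : ℝ :=
  traceNorm (matRPow τ (1 / 2 : ℝ) * X * matRPow τ (1 / 2 : ℝ))

/-- The spectral (operator) norm of a matrix, as the operator norm of the induced
linear map on Euclidean space. -/
def specNorm {n : Type*} [Fintype n] [DecidableEq n] (M : Matrix n n ℂ) : ℝ :=
  ‖LinearMap.toContinuousLinearMap (Matrix.toEuclideanLin M)‖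

/-- The `d × d` quantum Fourier transform, `(U)_{jk} = e^{2πi jk/d}/√d` for `j,k ∈ {1,…,d}`. -/
def fourierMat (d : ℕ) : Matrix (Fin d) (Fin d) ℂ :=
  Matrix.of fun j k =>
    Complex.exp (2 * (Real.pi : ℂ) * Complex.I * ((((j : ℕ) : ℂ) + 1) * (((k : ℕ) : ℂ) + 1))
        / (d : ℂ)) / ((Real.sqrt d : ℝ) : ℂ)

/-- `U_1 = 1` and `U_2` the quantum Fourier transform. -/
def flowerU (d : ℕ) : Fin 2 → Matrix (Fin d) (Fin d) ℂ :=
  fun l => if l = 0 then 1 else fourierMat d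

/-- The flower state `ρ^f = (1/2d) Σ_{i,k} Σ_{j,l} ⟨k|U_l† U_j|i⟩ |ii⟩⟨kk|_{AB} ⊗ |jj⟩⟨ll|_{A'B'}`,
written on the index `(A × A') × (B × B')` (input system times output system). -/
def flowerState (d : ℕ) :
    Matrix ((Fin d × Fin 2) × (Fin d × Fin 2)) ((Fin d × Fin 2) × (Fin d × Fin 2)) ℂ :=
  Matrix.of fun x y =>
    if x.2.1 = x.1.1 ∧ x.2.2 = x.1.2 ∧ y.2.1 = y.1.1 ∧ y.2.2 = y.1.2 then
      (1 / (2 * (d : ℂ))) * (((flowerU d y.1.2)ᴴ * flowerU d x.1.2) y.1.1 x.1.1)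
    else 0

/-- `p = 1/(√d + 1)`. -/
def pparam (d : ℕ) : ℝ := 1 / (Real.sqrt d + 1)

/-- `Y = (1/d) Σ_{i,j} u_{ij} |ii⟩⟨jj|` on `ℂ^d_A ⊗ ℂ^d_B`, `u` the QFT entries. -/
def Ymat (d : ℕ) : Matrix (Fin d × Fin d) (Fin d × Fin d) ℂ :=
  Matrix.of fun x y =>
    if x.1 = x.2 ∧ y.1 = y.2 then (1 / (d : ℂ)) * fourierMat d x.1 y.1 else 0

/-- The blocks of the separable comparison Choi matrix `C_S`, indexed by the `A'B'` qubit pair. -/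
def CSblock (d : ℕ) (i j : Fin 2 × Fin 2) : Matrix (Fin d × Fin d) (Fin d × Fin d) ℂ :=
  if i = j then
    if i = (0, 1) then ((2 * pparam d : ℝ) : ℂ) • matRPow (Ymat d * (Ymat d)ᴴ) (1 / 2 : ℝ)
    else if i = (1, 0) then ((2 * pparam d : ℝ) : ℂ) • matRPow ((Ymat d)ᴴ * Ymat d) (1 / 2 : ℝ)
    else (((1 - pparam d) / (d ^ 2 : ℝ) : ℝ) : ℂ) • (1 : Matrix (Fin d × Fin d) (Fin d × Fin d) ℂ)
  else 0

/-- The separable comparison Choi matrix `C_S` on `ℂ²_{A'} ⊗ ℂ²_{B'} ⊗ ℂ^d_A ⊗ ℂ^d_B`,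
written on the index `(A' × A) × (B' × B)` grouping the bipartition `(A'A) : (B'B)`. -/
def CSmat (d : ℕ) :
    Matrix ((Fin 2 × Fin d) × (Fin 2 × Fin d)) ((Fin 2 × Fin d) × (Fin 2 × Fin d)) ℂ :=
  Matrix.of fun x y =>
    (1 / (2 * (1 + pparam d) : ℝ) : ℂ) *
      CSblock d (x.1.1, x.2.1) (y.1.1, y.2.1) (x.1.2, x.2.2) (y.1.2, y.2.2)

/-- The blocks of the matrix `M` (the partially transposed state), indexed by the `A'B'`
qubit pair. -/
def Mblock (d : ℕ) (i j : Fin 2 × Fin 2) : Matrix (Fin d × Fin d) (Fin d × Fin d) ℂ :=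
  if i = j then
    if i = (0, 1) then ((pparam d : ℝ) : ℂ) • matRPow (Ymat d * (Ymat d)ᴴ) (1 / 2 : ℝ)
    else if i = (1, 0) then ((pparam d : ℝ) : ℂ) • matRPow ((Ymat d)ᴴ * Ymat d) (1 / 2 : ℝ)
    else (((1 - pparam d) / (d ^ 2 : ℝ) : ℝ) : ℂ) • (1 : Matrix (Fin d × Fin d) (Fin d × Fin d) ℂ)
  else if i = (0, 1) ∧ j = (1, 0) then ((pparam d : ℝ) : ℂ) • Ymat d
  else if i = (1, 0) ∧ j = (0, 1) then ((pparam d : ℝ) : ℂ) • (Ymat d)ᴴ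
  else 0

/-- The matrix `M` on `ℂ²_{A'} ⊗ ℂ²_{B'} ⊗ ℂ^d_A ⊗ ℂ^d_B`, written on the index
`(A' × A) × (B' × B)`. -/
def Mmat (d : ℕ) :
    Matrix ((Fin 2 × Fin d) × (Fin 2 × Fin d)) ((Fin 2 × Fin d) × (Fin 2 × Fin d)) ℂ :=
  Matrix.of fun x y =>
    (1 / 2 : ℂ) * Mblock d (x.1.1, x.2.1) (y.1.1, y.2.1) (x.1.2, x.2.2) (y.1.2, y.2.2)

end


/-!
Write `E` for the isometry `|i⟩ ↦ |ii⟩` and `U` for the Fourier matrix. Then `Y = d⁻¹ E U Eᴴ`, so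
`Y Yᴴ = Yᴴ Y = d⁻² E Eᴴ` with `E Eᴴ` a projection, and both square roots equal `d⁻¹ E Eᴴ`. Hence
`(1 + p) C_S - M` vanishes outside the `|01⟩, |10⟩` blocks, where it is
`(p / 2d) [[E Eᴴ, -E U Eᴴ], [-E Uᴴ Eᴴ, E Eᴴ]] = (p / 2d) Gᴴ G` for `G = [Eᴴ, -U Eᴴ]`,
using only that `U` is unitary and `Eᴴ E = 1`.
-/

section Fourier

open Complex

theorem fourierMat_apply_eq_pow {d : ℕ} (j k : Fin d) :
    fourierMat d j k =
      exp (2 * Real.pi * I / d) ^ (((j : ℕ) + 1) * ((k : ℕ) + 1)) / (Real.sqrt d : ℂ) := by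
  rw [fourierMat, of_apply, ← exp_nat_mul]
  push_cast
  ring_nf

theorem fourierMat_conjTranspose_mul_self (d : ℕ) : (fourierMat d)ᴴ * fourierMat d = 1 := by
  rcases eq_or_ne d 0 with rfl | hd
  · exact Subsingleton.elim _ _
  have hconj : (starRingEnd ℂ) (exp (2 * Real.pi * I / d)) = (exp (2 * Real.pi * I / d))⁻¹ := by
    rw [← Complex.exp_conj, ← exp_neg]
    congr 1
    simp only [map_div₀, map_mul, map_ofNat, conj_ofReal, conj_I, map_natCast]
    ring
  have hζ : IsPrimitiveRoot (exp (2 * Real.pi * I / d)) d := isPrimitiveRoot_exp d hd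
  obtain ⟨ζ, hζdef⟩ : ∃ ζ, exp (2 * Real.pi * I / d) = ζ := ⟨_, rfl⟩
  rw [hζdef] at hconj hζ
  have hsqrt : (Real.sqrt d : ℂ) * (Real.sqrt d : ℂ) = d := by
    rw [← ofReal_mul, Real.mul_self_sqrt d.cast_nonneg]
    norm_cast
  ext j k
  have hterm (i : Fin d) : (fourierMat d)ᴴ j i * fourierMat d i k =
      (ζ ^ ((k : ℤ) - (j : ℤ))) ^ ((i : ℕ) + 1) / d := by
    rw [conjTranspose_apply, fourierMat_apply_eq_pow, fourierMat_apply_eq_pow, hζdef, star_div₀,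
      star_pow, Complex.star_def, hconj, conj_ofReal, div_mul_div_comm, hsqrt, inv_pow,
      ← zpow_natCast, ← zpow_natCast, ← zpow_natCast, ← _root_.zpow_neg,
      ← zpow_add₀ (hζ.ne_zero hd), ← _root_.zpow_mul]
    push_cast
    ring_nf
  rw [mul_apply, Finset.sum_congr rfl fun i _ => hterm i, ← Finset.sum_div, one_apply]
  by_cases hjk : j = k
  · subst hjk
    simp [hd]
  -- `ζ ^ (k - j)` is a nontrivial `d`-th root of unity, so its geometric sum vanishes.
  have hω1 : ζ ^ ((k : ℤ) - j) ≠ 1 := by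
    rw [Ne, hζ.zpow_eq_one_iff_dvd]
    intro hdvd
    have := Int.eq_zero_of_abs_lt_dvd hdvd (abs_sub_lt_iff.mpr ⟨by omega, by omega⟩)
    exact hjk (Fin.ext (by omega))
  have hωd : (ζ ^ ((k : ℤ) - j)) ^ d = 1 := by
    rw [← zpow_natCast, ← _root_.zpow_mul, mul_comm, _root_.zpow_mul, zpow_natCast,
      hζ.pow_eq_one, _root_.one_zpow]
  rw [if_neg hjk, Fin.sum_univ_eq_sum_range (fun i => (ζ ^ ((k : ℤ) - j)) ^ (i + 1)),
    Finset.sum_congr rfl fun i _ => pow_succ' _ i, ← Finset.mul_sum, geom_sum_eq hω1, hωd]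
  simp

end Fourier

theorem matRPow_smul_of_isIdempotentElem {n : Type*} [Fintype n] [DecidableEq n]
    {P : Matrix n n ℂ} (hP : IsSelfAdjoint P) (hPP : IsIdempotentElem P) (c : ℝ) {r : ℝ}
    (hr : r ≠ 0) : matRPow (c • P) r = c ^ r • P := by
  have hspec := hPP.spectrum_subset ℝ
  calc matRPow (c • P) r = cfc (fun x : ℝ => (c * x) ^ r) P := by
        rw [matRPow, ← cfc_const_mul_id c P,
          ← cfc_comp' _ _ P (((hPP.finite_spectrum ℝ).image _).continuousOn _)]
    _ = cfc (fun x : ℝ => c ^ r * x) P :=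
        cfc_congr fun x hx => by rcases hspec hx with rfl | rfl <;> simp [Real.zero_rpow hr]
    _ = c ^ r • P := cfc_const_mul_id _ P

theorem isIdempotentElem_mul_conjTranspose_of_isometry {m n : Type*} [Fintype m] [Fintype n]
    [DecidableEq n] {V : Matrix m n ℂ} (hV : Vᴴ * V = 1) : IsIdempotentElem (V * Vᴴ) := by
  rw [IsIdempotentElem, Matrix.mul_assoc, ← Matrix.mul_assoc Vᴴ, hV, Matrix.one_mul]

theorem conj_isometry_mul_conjTranspose {m n : Type*} [Fintype m] [Fintype n] [DecidableEq n]
    {V : Matrix m n ℂ} (hV : Vᴴ * V = 1) {U : Matrix n n ℂ} (hU : U * Uᴴ = 1) :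
    V * U * Vᴴ * (V * U * Vᴴ)ᴴ = V * Vᴴ := by
  simp only [conjTranspose_mul, conjTranspose_conjTranspose, Matrix.mul_assoc]
  rw [← Matrix.mul_assoc Vᴴ V, hV, Matrix.one_mul, ← Matrix.mul_assoc U, hU, Matrix.one_mul]

theorem matRPow_half_conj_isometry {m n : Type*} [Fintype m] [Fintype n] [DecidableEq m]
    [DecidableEq n] {V : Matrix m n ℂ} (hV : Vᴴ * V = 1) {U : Matrix n n ℂ} (hU : U * Uᴴ = 1)
    {c : ℝ} (hc : 0 ≤ c) :
    matRPow (c • (V * U * Vᴴ) * (c • (V * U * Vᴴ))ᴴ) (1 / 2) = c • (V * Vᴴ) := by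
  rw [conjTranspose_smul, star_trivial, smul_mul_smul_comm, conj_isometry_mul_conjTranspose hV hU,
    matRPow_smul_of_isIdempotentElem (isHermitian_mul_conjTranspose_self _)
      (isIdempotentElem_mul_conjTranspose_of_isometry hV) _ (one_div_ne_zero two_ne_zero), ← sq,
    ← Real.sqrt_eq_rpow, Real.sqrt_sq hc]

def blockGram {κ m r : Type*} [Fintype r] (Q : κ → Matrix r m ℂ) : Matrix (κ × m) (κ × m) ℂ :=
  Matrix.of fun x y => ((Q x.1)ᴴ * Q y.1) x.2 y.2

theorem posSemidef_blockGram {κ m r : Type*} [Fintype κ] [Fintype m] [Fintype r]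
    (Q : κ → Matrix r m ℂ) : (blockGram Q).PosSemidef := by
  have : blockGram Q =
      (Matrix.of fun i (x : κ × m) => Q x.1 i x.2)ᴴ * Matrix.of fun i (x : κ × m) => Q x.1 i x.2 := by
    ext x y
    simp [blockGram, mul_apply]
  rw [this]
  exact posSemidef_conjTranspose_mul_self _

def diagEmbedding (n : Type*) [DecidableEq n] : Matrix (n × n) n ℂ :=
  (1 : Matrix (n × n) (n × n) ℂ).submatrix id fun i => (i, i)

theorem diagEmbedding_conjTranspose_mul_self (n : Type*) [Fintype n] [DecidableEq n] :
    (diagEmbedding n)ᴴ * diagEmbedding n = 1 := by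
  rw [diagEmbedding, conjTranspose_submatrix, conjTranspose_one,
    ← submatrix_mul _ _ _ _ _ Function.bijective_id, Matrix.one_mul]
  exact submatrix_one _ fun i j h => congrArg Prod.fst h

theorem diagEmbedding_apply_of_ne {n : Type*} [DecidableEq n] {a b : n} (hab : a ≠ b) :
    diagEmbedding n (a, b) = 0 := by
  ext i
  simp only [diagEmbedding, submatrix_apply, id_eq, one_apply, Prod.mk.injEq, Pi.zero_apply]
  exact if_neg fun h => hab (h.1.trans h.2.symm)

theorem Ymat_eq_smul (d : ℕ) :
    Ymat d = (d : ℝ)⁻¹ • (diagEmbedding (Fin d) * fourierMat d * (diagEmbedding (Fin d))ᴴ) := by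
  ext ⟨a, b⟩ ⟨a', b'⟩
  by_cases hab : a = b
  · by_cases hab' : a' = b'
    · subst hab hab'
      simp [Ymat, diagEmbedding, mul_apply, one_apply]
    · simp [Ymat, mul_apply, hab', diagEmbedding_apply_of_ne hab']
  · simp [Ymat, mul_apply, hab, diagEmbedding_apply_of_ne hab]

theorem conjTranspose_Ymat_eq_smul (d : ℕ) :
    (Ymat d)ᴴ =
      (d : ℝ)⁻¹ • (diagEmbedding (Fin d) * (fourierMat d)ᴴ * (diagEmbedding (Fin d))ᴴ) := by
  rw [Ymat_eq_smul, conjTranspose_smul, star_trivial, conjTranspose_mul, conjTranspose_mul,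
    conjTranspose_conjTranspose, Matrix.mul_assoc]

theorem matRPow_half_Ymat_mul_conjTranspose (d : ℕ) :
    matRPow (Ymat d * (Ymat d)ᴴ) (1 / 2) =
      (d : ℝ)⁻¹ • (diagEmbedding (Fin d) * (diagEmbedding (Fin d))ᴴ) := by
  rw [Ymat_eq_smul]
  exact matRPow_half_conj_isometry (diagEmbedding_conjTranspose_mul_self _)
    (mul_eq_one_comm.mp (fourierMat_conjTranspose_mul_self d)) (by positivity)

theorem matRPow_half_conjTranspose_Ymat_mul (d : ℕ) :
    matRPow ((Ymat d)ᴴ * Ymat d) (1 / 2) =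
      (d : ℝ)⁻¹ • (diagEmbedding (Fin d) * (diagEmbedding (Fin d))ᴴ) := by
  nth_rewrite 2 [← conjTranspose_conjTranspose (Ymat d)]
  rw [conjTranspose_Ymat_eq_smul]
  refine matRPow_half_conj_isometry (diagEmbedding_conjTranspose_mul_self _) ?_ (by positivity)
  rw [conjTranspose_conjTranspose, fourierMat_conjTranspose_mul_self]

noncomputable def repeaterGramFactor (d : ℕ) (i : Fin 2 × Fin 2) :
    Matrix (Fin d) (Fin d × Fin d) ℂ :=
  if i = (0, 1) then (diagEmbedding (Fin d))ᴴ
  else if i = (1, 0) then -(fourierMat d * (diagEmbedding (Fin d))ᴴ) else 0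

theorem CSblock_sub_Mblock (d : ℕ) (i j : Fin 2 × Fin 2) :
    CSblock d i j - Mblock d i j =
      (pparam d / d : ℝ) • ((repeaterGramFactor d i)ᴴ * repeaterGramFactor d j) := by
  have hUU (X : Matrix (Fin d) (Fin d × Fin d) ℂ) : (fourierMat d)ᴴ * (fourierMat d * X) = X := by
    rw [← Matrix.mul_assoc, fourierMat_conjTranspose_mul_self, Matrix.one_mul]
  simp only [CSblock, Mblock, matRPow_half_Ymat_mul_conjTranspose,
    matRPow_half_conjTranspose_Ymat_mul]
  fin_cases i <;> fin_cases j <;>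
    simp [repeaterGramFactor, Ymat_eq_smul, Matrix.mul_assoc, hUU] <;> module

theorem smul_CSmat_sub_Mmat_eq (d : ℕ) :
    (1 + pparam d) • CSmat d - Mmat d =
      (pparam d / (2 * d) : ℝ) • (blockGram (repeaterGramFactor d)).submatrix
        (Equiv.prodProdProdComm _ _ _ _) (Equiv.prodProdProdComm _ _ _ _) := by
  have h1p : (1 : ℂ) + pparam d ≠ 0 := by
    exact_mod_cast (by rw [pparam]; positivity : (1 : ℝ) + pparam d ≠ 0)
  ext ⟨⟨s, j⟩, t, k⟩ ⟨⟨s', j'⟩, t', k'⟩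
  have h := congrArg (· (j, k) (j', k')) (CSblock_sub_Mblock d (s, t) (s', t'))
  simp only [Matrix.sub_apply, Matrix.smul_apply, Complex.real_smul] at h
  simp only [Matrix.sub_apply, Matrix.smul_apply, CSmat, Mmat, blockGram, submatrix_apply,
    Equiv.prodProdProdComm_apply, of_apply, Complex.real_smul]
  push_cast at h ⊢
  field_simp
  linear_combination h

theorem repeater_dmax_bound_general (d : ℕ) :
    (((1 + pparam d : ℝ)) • CSmat d - Mmat d).PosSemidef ∧
      Dmax (Mmat d) (CSmat d) ≤ ((Real.logb 2 (1 + pparam d) : ℝ) : EReal) := by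
  have hp : 0 < pparam d := by rw [pparam]; positivity
  have hpsd : ((1 + pparam d) • CSmat d - Mmat d).PosSemidef := by
    rw [smul_CSmat_sub_Mmat_eq]
    exact ((posSemidef_blockGram _).submatrix _).smul (by positivity)
  exact ⟨hpsd, iInf_le_of_le ⟨1 + pparam d, by positivity, hpsd⟩ le_rfl⟩

/-- **Max-relative entropy computation** in the repeater example: `(1+p)·C_S − M` is positive
semidefinite; equivalently `D_max(M‖C_S) ≤ log₂(1 + p) = log₂(1 + 1/(√d + 1))`. -/
theorem repeater_dmax_bound (d : ℕ) (hd : 2 ≤ d) :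
    (((1 + pparam d : ℝ)) • CSmat d - Mmat d).PosSemidef ∧
      Dmax (Mmat d) (CSmat d) ≤ ((Real.logb 2 (1 + pparam d) : ℝ) : EReal) :=
  repeater_dmax_bound_general d
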